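/- arXiv:2010.08154 — 4 statements merged into one kernel-verified Lean document; each statement's English description precedes it below -/
import Mathlib

section
/- Fix an integer c ≥ 1 and a real λ_a > 0. The function θ ↦ Λ_c(θ)/θ on (−∞, 0) has a finite, strictly positive supremum, this supremum is attained at some θ*_c < 0, and θ*_c is the unique negative real solution of the stationarity equation Λ_c(θ) = θ·Λ_c′(θ), where Λ_c′ denotes the derivative of Λ_c. -/
open Real Set

section AuxLemmas

open Filter Topology

/-- Auxiliary function: `h(t) = log t + k·log(lam+t) − C`, corresponding to
`−Λ_c(−t)` after the substitution `t = −θ`. -/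
noncomputable def hfun (lam k C t : ℝ) : ℝ := Real.log t + k * Real.log (lam + t) - C

/-- Auxiliary function `φ(t) = t·h'(t) − h(t)`; its sign controls the monotonicity of `h(t)/t`. -/
noncomputable def phifun (lam k C t : ℝ) : ℝ := 1 + k * t / (lam + t) - hfun lam k C t

/-- `g(t) = h(t)/t`, corresponding to `Λ_c(θ)/θ`. -/
noncomputable def gfun (lam k C t : ℝ) : ℝ := hfun lam k C t / t

lemma hfun_hasDerivAt {lam k C t : ℝ} (hlam : 0 < lam) (ht : 0 < t) :
    HasDerivAt (hfun lam k C) (1/t + k/(lam+t)) t := by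
  have h1 : HasDerivAt (fun t : ℝ => Real.log t) (1/t) t := by
    simpa [one_div] using Real.hasDerivAt_log ht.ne'
  have h2 : HasDerivAt (fun t : ℝ => lam + t) 1 t := by
    simpa using (hasDerivAt_id t).const_add lam
  have h3 : HasDerivAt (fun t : ℝ => Real.log (lam + t)) (1/(lam+t)) t := by
    have := (Real.hasDerivAt_log (by positivity : lam + t ≠ 0)).comp t h2
    simpa [one_div, Function.comp_def] using this
  have := (h1.add (h3.const_mul k)).sub_const C
  show HasDerivAt (fun t => Real.log t + k * Real.log (lam + t) - C) (1/t + k/(lam+t)) t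
  simpa [div_eq_mul_inv] using this

lemma ratfun_hasDerivAt {lam k t : ℝ} (hlam : 0 < lam) (ht : 0 < t) :
    HasDerivAt (fun t : ℝ => k * t / (lam + t)) (k * lam / (lam + t)^2) t := by
  have h2 : HasDerivAt (fun t : ℝ => lam + t) 1 t := by
    simpa using (hasDerivAt_id t).const_add lam
  have h1 : HasDerivAt (fun t : ℝ => k * t) k t := by
    simpa using (hasDerivAt_id t).const_mul k
  have := h1.div h2 (by positivity : lam + t ≠ 0)
  refine this.congr_deriv ?_
  ring

lemma phifun_hasDerivAt {lam k C t : ℝ} (hlam : 0 < lam) (ht : 0 < t) :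
    HasDerivAt (phifun lam k C) (k * lam / (lam + t)^2 - (1/t + k/(lam+t))) t := by
  have := ((ratfun_hasDerivAt hlam ht (k := k)).const_add 1).sub
    (hfun_hasDerivAt hlam ht (k := k) (C := C))
  exact this

lemma phifun_deriv_neg {lam k t : ℝ} (hlam : 0 < lam) (hk : 0 ≤ k) (ht : 0 < t) :
    k * lam / (lam + t)^2 - (1/t + k/(lam+t)) < 0 := by
  have hlt : lam + t > 0 := by linarith
  have h1 : k * lam / (lam + t)^2 ≤ k / (lam + t) := by
    rw [div_le_div_iff₀ (by positivity) hlt]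
    nlinarith [mul_nonneg (mul_nonneg hk ht.le) (by linarith : (0:ℝ) ≤ lam + t)]
  have h2 : 0 < 1/t := by positivity
  linarith

lemma phifun_strictAntiOn {lam k C : ℝ} (hlam : 0 < lam) (hk : 0 ≤ k) :
    StrictAntiOn (phifun lam k C) (Ioi 0) := by
  apply strictAntiOn_of_deriv_neg (convex_Ioi 0)
  · intro t ht
    exact ((phifun_hasDerivAt hlam ht).continuousAt).continuousWithinAt
  · intro t ht
    rw [interior_Ioi] at ht
    rw [(phifun_hasDerivAt hlam ht).deriv]
    exact phifun_deriv_neg hlam hk ht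

lemma gfun_hasDerivAt {lam k C t : ℝ} (hlam : 0 < lam) (ht : 0 < t) :
    HasDerivAt (gfun lam k C) (phifun lam k C t / t^2) t := by
  have := (hfun_hasDerivAt hlam ht (k := k) (C := C)).div (hasDerivAt_id t) ht.ne'
  refine this.congr_deriv ?_
  have hlt : lam + t ≠ 0 := by positivity
  simp only [phifun, hfun, id]
  field_simp

lemma hfun_tendsto_atBot {lam k C : ℝ} (hlam : 0 < lam) :
    Tendsto (hfun lam k C) (𝓝[>] (0:ℝ)) atBot := by
  have h1 : Tendsto (fun t : ℝ => Real.log t) (𝓝[>] (0:ℝ)) atBot :=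
    Real.tendsto_log_nhdsGT_zero
  have h2 : Tendsto (fun t : ℝ => k * Real.log (lam + t) - C) (𝓝[>] (0:ℝ))
      (𝓝 (k * Real.log (lam + 0) - C)) := by
    apply Tendsto.mono_left _ nhdsWithin_le_nhds
    have : ContinuousAt (fun t : ℝ => lam + t) 0 := by fun_prop
    exact ((Real.continuousAt_log (by positivity)).comp this).const_smul k |>.sub
      continuousAt_const
  have := h1.atBot_add h2
  refine this.congr (fun t => ?_)
  simp [hfun]; ring

lemma hfun_tendsto_atTop {lam k C : ℝ} (hlam : 0 < lam) (hk : 0 ≤ k) :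
    Tendsto (hfun lam k C) atTop atTop := by
  apply tendsto_atTop_mono' _ (_ : ∀ᶠ t in atTop, Real.log t - C ≤ hfun lam k C t)
  · simpa [sub_eq_add_neg] using tendsto_atTop_add_const_right atTop (-C) Real.tendsto_log_atTop
  · filter_upwards [eventually_ge_atTop (1:ℝ)] with t ht
    have h1 : (1:ℝ) ≤ lam + t := by linarith
    have : 0 ≤ k * Real.log (lam + t) := mul_nonneg hk (Real.log_nonneg h1)
    simp only [hfun]; linarith

lemma phifun_exists_zero {lam k C : ℝ} (hlam : 0 < lam) (hk : 0 ≤ k) :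
    ∃ ts : ℝ, 0 < ts ∧ phifun lam k C ts = 0 := by
  -- a point where phifun is positive
  have htop : Tendsto (phifun lam k C) (𝓝[>] (0:ℝ)) atTop := by
    apply tendsto_atTop_mono' _
      (_ : ∀ᶠ t in 𝓝[>] (0:ℝ), 1 - hfun lam k C t ≤ phifun lam k C t)
    · have h := tendsto_neg_atBot_atTop.comp (hfun_tendsto_atBot hlam (k := k) (C := C))
      simpa [Function.comp, sub_eq_add_neg] using tendsto_atTop_add_const_left _ 1 h
    · filter_upwards [self_mem_nhdsWithin] with t (ht : 0 < t)
      have h1 : 0 ≤ k * t / (lam + t) := by positivity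
      simp only [phifun]; linarith
  obtain ⟨a, ha0, hapos⟩ : ∃ a : ℝ, 0 < a ∧ 0 < phifun lam k C a := by
    have h1 : ∀ᶠ t in 𝓝[>] (0:ℝ), 0 < phifun lam k C t :=
      htop.eventually (eventually_gt_atTop 0)
    have h2 : ∀ᶠ t in 𝓝[>] (0:ℝ), 0 < t := self_mem_nhdsWithin
    exact ((h2.and h1).exists).imp (fun a h => ⟨h.1, h.2⟩)
  -- a point where phifun is negative
  have hbot : Tendsto (phifun lam k C) atTop atBot := by
    have hineq : ∀ᶠ t in atTop, phifun lam k C t ≤ 1 + k - hfun lam k C t := by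
      filter_upwards [eventually_gt_atTop (0:ℝ)] with t ht
      have hlt : 0 < lam + t := by linarith
      have h1 : k * t / (lam + t) ≤ k := by
        rw [div_le_iff₀ hlt]
        nlinarith
      simp only [phifun]; linarith
    have hb : Tendsto (fun t => 1 + k - hfun lam k C t) atTop atBot := by
      have h := tendsto_neg_atTop_atBot.comp (hfun_tendsto_atTop hlam hk (C := C))
      simpa [Function.comp, sub_eq_add_neg] using tendsto_atBot_add_const_left _ (1 + k) h
    exact tendsto_atBot_mono' _ hineq hb
  obtain ⟨b, hab, hbneg⟩ : ∃ b : ℝ, a < b ∧ phifun lam k C b < 0 := by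
    have h1 : ∀ᶠ t in atTop, phifun lam k C t < 0 :=
      hbot.eventually (eventually_lt_atBot 0)
    exact (((eventually_gt_atTop a).and h1).exists).imp (fun b h => ⟨h.1, h.2⟩)
  have hcont : ContinuousOn (phifun lam k C) (Icc a b) := by
    intro t ht
    have h0 : 0 < t := lt_of_lt_of_le ha0 ht.1
    exact ((phifun_hasDerivAt hlam h0).continuousAt).continuousWithinAt
  have := intermediate_value_Icc' hab.le hcont
  have h0mem : (0:ℝ) ∈ Icc (phifun lam k C b) (phifun lam k C a) := ⟨hbneg.le, hapos.le⟩
  obtain ⟨ts, hts, hts0⟩ := this h0mem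
  exact ⟨ts, lt_of_lt_of_le ha0 hts.1, hts0⟩

lemma gfun_le {lam k C ts : ℝ} (hlam : 0 < lam) (hk : 0 ≤ k)
    (hts : 0 < ts) (hz : phifun lam k C ts = 0) :
    ∀ t : ℝ, 0 < t → gfun lam k C t ≤ gfun lam k C ts := by
  have hanti := phifun_strictAntiOn (lam := lam) (k := k) (C := C) hlam hk
  have hcont : ∀ t : ℝ, 0 < t → ContinuousWithinAt (gfun lam k C) (Ioc 0 ts) t :=
    fun t ht => ((gfun_hasDerivAt hlam ht).continuousAt).continuousWithinAt
  have hmono : StrictMonoOn (gfun lam k C) (Ioc 0 ts) := by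
    apply strictMonoOn_of_deriv_pos (convex_Ioc 0 ts)
    · intro t ht; exact hcont t ht.1
    · intro t ht
      rw [interior_Ioc] at ht
      rw [(gfun_hasDerivAt hlam ht.1).deriv]
      have hphi : 0 < phifun lam k C t := by
        have := hanti ht.1 hts ht.2
        rwa [hz] at this
      exact div_pos hphi (pow_pos ht.1 2)
  have hantig : StrictAntiOn (gfun lam k C) (Ici ts) := by
    apply strictAntiOn_of_deriv_neg (convex_Ici ts)
    · intro t ht
      exact ((gfun_hasDerivAt hlam (lt_of_lt_of_le hts ht)).continuousAt).continuousWithinAt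
    · intro t ht
      rw [interior_Ici] at ht
      have h0 : 0 < t := hts.trans ht
      rw [(gfun_hasDerivAt hlam h0).deriv]
      have hphi : phifun lam k C t < 0 := by
        have := hanti (mem_Ioi.mpr hts) (mem_Ioi.mpr h0) ht
        rwa [hz] at this
      exact div_neg_of_neg_of_pos hphi (pow_pos h0 2)
  intro t ht
  rcases le_or_gt t ts with h | h
  · rcases eq_or_lt_of_le h with rfl | h'
    · exact le_refl _
    · exact (hmono ⟨ht, h⟩ ⟨hts, le_refl ts⟩ h').le
  · exact (hantig (self_mem_Ici) (mem_Ici.mpr h.le) h).le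

lemma gfun_pos {lam k C ts : ℝ} (hlam : 0 < lam) (hk : 0 ≤ k)
    (hC : C = (k + 1) * Real.log lam)
    (hts : 0 < ts) (hz : phifun lam k C ts = 0) :
    0 < gfun lam k C ts := by
  have h2 : 0 < gfun lam k C (2 * lam) := by
    have hh : 0 < hfun lam k C (2 * lam) := by
      have e1 : Real.log (2 * lam) = Real.log 2 + Real.log lam :=
        Real.log_mul (by norm_num) hlam.ne'
      have e2 : Real.log lam ≤ Real.log (lam + 2 * lam) :=
        Real.log_le_log hlam (by linarith)
      have e3 : k * Real.log lam ≤ k * Real.log (lam + 2 * lam) :=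
        mul_le_mul_of_nonneg_left e2 hk
      have hlog2 : 0 < Real.log 2 := Real.log_pos (by norm_num)
      simp only [hfun, hC, e1]
      nlinarith
    exact div_pos hh (by linarith)
  exact lt_of_lt_of_le h2 (gfun_le hlam hk hts hz (2 * lam) (by linarith))

end AuxLemmas

/-- `Λ_c(θ) = log( λ_a^c / ((−θ)·(λ_a − θ)^{c−1}) )` for `θ < 0`. -/
noncomputable def LambdaC (c : ℕ) (lam θ : ℝ) : ℝ :=
  Real.log (lam ^ c / ((-θ) * (lam - θ) ^ (c - 1)))

section Bridge

open Filter Topology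

lemma lambdaC_eq {c : ℕ} (hc : 1 ≤ c) {lam : ℝ} (hlam : 0 < lam) {θ : ℝ} (hθ : θ < 0) :
    LambdaC c lam θ =
      -(hfun lam ((c - 1 : ℕ) : ℝ) ((((c - 1 : ℕ) : ℝ) + 1) * Real.log lam) (-θ)) := by
  have ht : 0 < -θ := by linarith
  have hlt : 0 < lam + -θ := by linarith
  have hsub : lam - θ = lam + -θ := by ring
  have hk : ((c - 1 : ℕ) : ℝ) = (c : ℝ) - 1 := by
    push_cast [Nat.cast_sub hc]; ring
  rw [LambdaC, hsub, Real.log_div (by positivity) (by positivity),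
    Real.log_mul (by positivity) (by positivity), Real.log_pow, Real.log_pow, hfun]
  rw [hk]
  ring

lemma lambdaC_deriv {c : ℕ} (hc : 1 ≤ c) {lam : ℝ} (hlam : 0 < lam) {θ : ℝ} (hθ : θ < 0) :
    deriv (LambdaC c lam) θ = 1/(-θ) + ((c - 1 : ℕ) : ℝ)/(lam + -θ) := by
  set k : ℝ := ((c - 1 : ℕ) : ℝ)
  set C : ℝ := (k + 1) * Real.log lam
  have ht : 0 < -θ := by linarith
  have hF : HasDerivAt (fun θ' : ℝ => -(hfun lam k C (-θ'))) (1/(-θ) + k/(lam + -θ)) θ := by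
    have h1 : HasDerivAt (fun θ' : ℝ => hfun lam k C (-θ'))
        ((1/(-θ) + k/(lam + -θ)) * (-1)) θ :=
      (hfun_hasDerivAt hlam ht).comp θ (hasDerivAt_neg θ)
    have := h1.neg
    refine this.congr_deriv ?_
    ring
  have heq : LambdaC c lam =ᶠ[𝓝 θ] fun θ' : ℝ => -(hfun lam k C (-θ')) := by
    filter_upwards [Iio_mem_nhds hθ] with x (hx : x < 0)
    exact lambdaC_eq hc hlam hx
  rw [heq.deriv_eq, hF.deriv]

end Bridge

/-- Fix an integer `c ≥ 1` and a real `λ_a > 0`. The function `θ ↦ Λ_c(θ)/θ`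
on `(−∞, 0)` has a finite, strictly positive supremum, attained at some `θ*_c < 0`, and `θ*_c`
is the unique negative real solution of the stationarity equation `Λ_c(θ) = θ·Λ_c′(θ)`. -/
theorem lambdaC_sup_attained_unique_stationary (c : ℕ) (hc : 1 ≤ c) (lam : ℝ)
    (hlam : 0 < lam) :
    ∃ θs : ℝ, θs < 0 ∧
      IsGreatest ((fun θ : ℝ => LambdaC c lam θ / θ) '' Set.Iio 0)
        (LambdaC c lam θs / θs) ∧
      0 < LambdaC c lam θs / θs ∧
      (∀ θ : ℝ, θ < 0 →
        (LambdaC c lam θ = θ * deriv (LambdaC c lam) θ ↔ θ = θs)) := by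
  set k : ℝ := ((c - 1 : ℕ) : ℝ) with hkdef
  have hk : 0 ≤ k := Nat.cast_nonneg _
  set C : ℝ := (k + 1) * Real.log lam with hCdef
  obtain ⟨ts, hts, hz⟩ := phifun_exists_zero (lam := lam) (k := k) (C := C) hlam hk
  refine ⟨-ts, by linarith, ?_, ?_, ?_⟩
  -- rewriting Λ/θ as gfun
  all_goals
    have hgf : ∀ θ : ℝ, θ < 0 → LambdaC c lam θ / θ = gfun lam k C (-θ) := by
      intro θ hθ
      rw [lambdaC_eq hc hlam hθ, gfun]
      rw [show θ = -(-θ) by ring, neg_div_neg_eq, neg_neg]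
  · constructor
    · exact ⟨-ts, by simpa using hts, rfl⟩
    · rintro y ⟨θ, hθ, rfl⟩
      simp only [mem_Iio] at hθ
      show LambdaC c lam θ / θ ≤ LambdaC c lam (-ts) / (-ts)
      rw [hgf θ hθ, hgf (-ts) (by linarith), neg_neg]
      exact gfun_le hlam hk hts hz (-θ) (by linarith)
  · rw [hgf (-ts) (by linarith), neg_neg]
    exact gfun_pos hlam hk hCdef hts hz
  · intro θ hθ
    have ht : 0 < -θ := by linarith
    have hlt : 0 < lam + -θ := by linarith
    have hstep : LambdaC c lam θ = θ * deriv (LambdaC c lam) θ ↔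
        phifun lam k C (-θ) = 0 := by
      have hθne : θ ≠ 0 := by linarith
      have hrhs : θ * (1/(-θ) + k/(lam + -θ)) = -1 - k * (-θ)/(lam + -θ) := by
        field_simp
        ring
      rw [lambdaC_eq hc hlam hθ, lambdaC_deriv hc hlam hθ, ← hkdef, ← hCdef, hrhs, phifun]
      constructor <;> intro h <;> linarith
    rw [hstep]
    constructor
    · intro h
      have := (phifun_strictAntiOn (lam := lam) (k := k) (C := C) hlam hk).injOn
        (mem_Ioi.mpr ht) (mem_Ioi.mpr hts) (h.trans hz.symm)
      linarith
    · intro h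
      rw [h, neg_neg]
      exact hz
end

section
/- Fix a real λ_a > 0. For each integer c ≥ 1 let S_c := sup_{θ<0} Λ_c(θ)/θ (a positive real number) and define the amplification factor φ_c := c/(λ_a·S_c). Then φ_c → 1 as c → ∞; equivalently, λ_a·S_c / c → 1 as c → ∞. -/
/-!
Substituting `θ = -λ_a u` turns `λ_a Λ_c(θ)/θ` into
`g_c(u) = (log u + (c - 1) log (1 + u)) / u`, independent of `λ_a`.
The bounds `log u ≤ u - 1` and `log (1 + u) ≤ u` give `g_c ≤ c`, while at `u = 1/√c`
one finds `g_c(u) / c = (1 - 1/c) √c log (1 + 1/√c) - log √c / √c → 1`.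
Hence `λ_a S_c / c → 1`.
-/

open Real Set Filter

open Topology

noncomputable def scaledRate (c u : ℝ) : ℝ := (log u + (c - 1) * log (1 + u)) / u

lemma scaledRate_le {c u : ℝ} (hc : 1 ≤ c) (hu : 0 < u) : scaledRate c u ≤ c := by
  have hlog : log u ≤ u - 1 := log_le_sub_one_of_pos hu
  have hlog_one_add : log (1 + u) ≤ u := by
    linarith [log_le_sub_one_of_pos (by linarith : 0 < 1 + u)]
  have := mul_le_mul_of_nonneg_left hlog_one_add (sub_nonneg.2 hc)
  rw [scaledRate, div_le_iff₀ hu]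
  nlinarith

lemma tendsto_scaledRate_sq_inv_div_sq :
    Tendsto (fun s : ℝ => scaledRate (s ^ 2) s⁻¹ / s ^ 2) atTop (𝓝 1) := by
  have hmul_log : Tendsto (fun s : ℝ => s * log (1 + 1 / s)) atTop (𝓝 1) :=
    tendsto_mul_log_one_add_div_atTop 1
  have hinv_sq : Tendsto (fun s : ℝ => (s ^ 2)⁻¹) atTop (𝓝 0) :=
    tendsto_inv_atTop_zero.comp (tendsto_pow_atTop two_ne_zero)
  have hlog_div : Tendsto (fun s : ℝ => log s / s) atTop (𝓝 0) :=
    isLittleO_log_id_atTop.tendsto_div_nhds_zero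
  have hlim := ((tendsto_const_nhds (x := (1 : ℝ)).sub hinv_sq).mul hmul_log).sub hlog_div
  rw [sub_zero, sub_zero, mul_one] at hlim
  refine hlim.congr' ?_
  filter_upwards [eventually_gt_atTop 0] with s hs
  rw [scaledRate, log_inv, one_div]
  field_simp
  ring

section LambdaC

variable {c : ℕ} {lam : ℝ}

lemma lambdaC_neg_mul (hc : 1 ≤ c) (hlam : 0 < lam) {u : ℝ} (hu : 0 < u) :
    LambdaC c lam (-(lam * u)) = -(log u + ((c : ℝ) - 1) * log (1 + u)) := by
  obtain ⟨k, rfl⟩ := Nat.exists_eq_add_of_le' hc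
  have harg : lam ^ (k + 1) / (-(-(lam * u)) * (lam - -(lam * u)) ^ (k + 1 - 1))
      = (u * (1 + u) ^ k)⁻¹ := by
    rw [neg_neg, Nat.add_sub_cancel, sub_neg_eq_add, show lam + lam * u = lam * (1 + u) by ring,
      mul_pow, pow_succ']
    field_simp
  rw [LambdaC, harg, log_inv, log_mul hu.ne' (by positivity), log_pow]
  push_cast
  ring

lemma lam_mul_lambdaC_div (hc : 1 ≤ c) (hlam : 0 < lam) {θ : ℝ} (hθ : θ < 0) :
    lam * (LambdaC c lam θ / θ) = scaledRate c (-θ / lam) := by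
  obtain ⟨u, hu, rfl⟩ : ∃ u, 0 < u ∧ θ = -(lam * u) :=
    ⟨-θ / lam, div_pos (neg_pos.2 hθ) hlam, by field_simp⟩
  rw [lambdaC_neg_mul hc hlam hu, show -(-(lam * u)) / lam = u by field_simp, scaledRate]
  field_simp

lemma lambdaC_div_le (hc : 1 ≤ c) (hlam : 0 < lam) {θ : ℝ} (hθ : θ < 0) :
    LambdaC c lam θ / θ ≤ c / lam := by
  rw [le_div_iff₀' hlam, lam_mul_lambdaC_div hc hlam hθ]
  exact scaledRate_le (by exact_mod_cast hc) (div_pos (neg_pos.2 hθ) hlam)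

lemma lam_mul_sSup_lambdaC_div_le (hc : 1 ≤ c) (hlam : 0 < lam) :
    lam * sSup ((fun θ : ℝ => LambdaC c lam θ / θ) '' Iio 0) ≤ c := by
  rw [← le_div_iff₀' hlam]
  refine csSup_le ⟨_, -1, by norm_num, rfl⟩ ?_
  rintro _ ⟨θ, hθ, rfl⟩
  exact lambdaC_div_le hc hlam hθ

lemma scaledRate_le_lam_mul_sSup_lambdaC_div (hc : 1 ≤ c) (hlam : 0 < lam) {u : ℝ} (hu : 0 < u) :
    scaledRate c u ≤ lam * sSup ((fun θ : ℝ => LambdaC c lam θ / θ) '' Iio 0) := by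
  have hθ : -(lam * u) < 0 := neg_lt_zero.2 (mul_pos hlam hu)
  have hbdd : BddAbove ((fun θ : ℝ => LambdaC c lam θ / θ) '' Iio 0) := by
    refine ⟨c / lam, ?_⟩
    rintro _ ⟨θ, hθ, rfl⟩
    exact lambdaC_div_le hc hlam hθ
  calc scaledRate c u = lam * (LambdaC c lam (-(lam * u)) / -(lam * u)) := by
        rw [lam_mul_lambdaC_div hc hlam hθ, neg_neg, mul_div_cancel_left₀ u hlam.ne']
    _ ≤ _ := by gcongr; exact le_csSup hbdd ⟨_, hθ, rfl⟩

end LambdaC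

/-- Fix a real `λ_a > 0`. With `S_c = sup_{θ<0} Λ_c(θ)/θ` and the
amplification factor `φ_c = c/(λ_a·S_c)`, one has `φ_c → 1` as `c → ∞`. -/
theorem phi_c_tendsto_one (lam : ℝ) (hlam : 0 < lam) :
    Filter.Tendsto
      (fun c : ℕ =>
        (c : ℝ) / (lam * sSup ((fun θ : ℝ => LambdaC c lam θ / θ) '' Set.Iio 0)))
      Filter.atTop (nhds 1) := by
  set S : ℕ → ℝ := fun c => sSup ((fun θ : ℝ => LambdaC c lam θ / θ) '' Set.Iio 0)
  have hlower : Tendsto (fun c : ℕ => scaledRate c (√c)⁻¹ / c) atTop (𝓝 1) := by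
    refine (tendsto_scaledRate_sq_inv_div_sq.comp
      (tendsto_sqrt_atTop.comp tendsto_natCast_atTop_atTop)).congr fun c => ?_
    simp only [Function.comp_apply, sq_sqrt (Nat.cast_nonneg c)]
  have hratio : Tendsto (fun c : ℕ => lam * S c / c) atTop (𝓝 1) := by
    refine tendsto_of_tendsto_of_tendsto_of_le_of_le' hlower tendsto_const_nhds ?_ ?_
    all_goals filter_upwards [eventually_ge_atTop 1] with c hc
    · have hc_pos : (0 : ℝ) < c := by exact_mod_cast hc
      gcongr
      exact scaledRate_le_lam_mul_sSup_lambdaC_div hc hlam (by positivity)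
    · exact div_le_one_of_le₀ (lam_mul_sSup_lambdaC_div_le hc hlam) c.cast_nonneg
  simpa only [inv_div, inv_one] using hratio.inv₀ one_ne_zero
end

section
/- Let m ≥ 1 be an integer, Δ ≥ 0, 0 < λ_min ≤ λ_max, and κ > 0 reals, and set v = λ_min·κ/(1+κ) (so 0 < v < λ_min). Let Y_1, …, Y_m be independent nonnegative random variables on a probability space such that E[ e^{v Y_d} ] ≤ λ_max/(λ_min − v) for each d. Then P( ∑_{d=1}^m (Δ + Y_d) > m·( Δ + (1+κ)/λ_min ) ) ≤ exp( m·( −κ + log( (λ_max/λ_min)·(1+κ) ) ) ). -/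
open MeasureTheory ProbabilityTheory Real

/-!
Chernoff's bound at the exponent `v`: the deterministic shifts `Δ` cancel, so the event is
contained in `{m (1+κ)/λ_min ≤ ∑ Y_d}`, and by independence the moment generating function of
`∑ Y_d` at `v` is at most `(λ_max/(λ_min - v))^m`. The choice `v = λ_min κ/(1+κ)` makes
`v · m (1+κ)/λ_min = m κ` and `λ_max/(λ_min - v) = (λ_max/λ_min)(1+κ)`.
-/

theorem ProbabilityTheory.iIndepFun.mgf_sum_le_pow {ι Ω : Type*} [Fintype ι]
    [MeasurableSpace Ω] {μ : Measure Ω} {X : ι → Ω → ℝ} (hindep : iIndepFun X μ)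
    (hmeas : ∀ i, Measurable (X i)) {t B : ℝ} (hB : ∀ i, mgf (X i) μ t ≤ B) :
    mgf (∑ i, X i) μ t ≤ B ^ Fintype.card ι := by
  rw [hindep.mgf_sum hmeas, ← Finset.card_univ, ← Finset.prod_const]
  exact Finset.prod_le_prod (fun _ _ ↦ mgf_nonneg) fun i _ ↦ hB i

theorem ProbabilityTheory.iIndepFun.measureReal_sum_ge_le {ι Ω : Type*} [Fintype ι]
    [MeasurableSpace Ω] {μ : Measure Ω} {X : ι → Ω → ℝ} (hindep : iIndepFun X μ)
    (hmeas : ∀ i, Measurable (X i)) {t B : ℝ} (ht : 0 ≤ t)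
    (hint : ∀ i, Integrable (fun ω ↦ exp (t * X i ω)) μ) (hB : ∀ i, mgf (X i) μ t ≤ B)
    (ε : ℝ) :
    μ.real {ω | ε ≤ ∑ i, X i ω} ≤ exp (-t * ε) * B ^ Fintype.card ι := by
  have := hindep.isProbabilityMeasure
  have hint_sum := hindep.integrable_exp_mul_sum hmeas (s := .univ) fun i _ ↦ hint i
  simpa only [Finset.sum_apply] using
    (measure_ge_le_exp_mul_mgf ε ht hint_sum).trans
      (by gcongr; exact hindep.mgf_sum_le_pow hmeas hB)

theorem setOf_mul_add_lt_sum_add_eq {ι Ω : Type*} [Fintype ι] (X : ι → Ω → ℝ) (a c : ℝ) :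
    {ω | Fintype.card ι * (a + c) < ∑ i, (a + X i ω)} =
      {ω | Fintype.card ι * c < ∑ i, X i ω} := by
  simp only [Finset.sum_add_distrib, Finset.sum_const, Finset.card_univ,
    nsmul_eq_mul, mul_add, add_lt_add_iff_left]

theorem exp_neg_mul_mul_pow {a b : ℝ} (hb : 0 < b) (n : ℕ) :
    exp (-(n * a)) * b ^ n = exp (n * (-a + log b)) := by
  rw [mul_add, exp_add, ← log_pow, exp_log (pow_pos hb n), mul_neg]

theorem epoch_waiting_chernoff_general {Ω : Type*} [MeasurableSpace Ω] (μ : Measure Ω) (m : ℕ) (Δ : ℝ)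
    (lammin lammax κ : ℝ) (h0 : 0 < lammin) (h1 : lammin ≤ lammax) (hκ : 0 < κ)
    (v : ℝ) (hv : v = lammin * κ / (1 + κ))
    (Y : Fin m → Ω → ℝ) (hmeas : ∀ d, Measurable (Y d))
    (hindep : iIndepFun Y μ)
    (hint : ∀ d, Integrable (fun ω => Real.exp (v * Y d ω)) μ)
    (hmgf : ∀ d, ∫ ω, Real.exp (v * Y d ω) ∂μ ≤ lammax / (lammin - v)) :
    (μ {ω | m * (Δ + (1 + κ) / lammin) < ∑ d, (Δ + Y d ω)}).toReal ≤
      Real.exp (m * (-κ + Real.log ((lammax / lammin) * (1 + κ)))) := by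
  have := hindep.isProbabilityMeasure
  have hv0 : 0 ≤ v := by rw [hv]; positivity
  have hbound : lammax / (lammin - v) = lammax / lammin * (1 + κ) := by
    rw [hv]; field_simp; ring
  have hexponent : v * (m * ((1 + κ) / lammin)) = m * κ := by
    rw [hv]; field_simp
  have hchernoff := hindep.measureReal_sum_ge_le hmeas hv0 hint hmgf (m * ((1 + κ) / lammin))
  rw [Fintype.card_fin, hbound, neg_mul, hexponent,
    exp_neg_mul_mul_pow (by have := h0.trans_le h1; positivity)] at hchernoff
  have hevent := setOf_mul_add_lt_sum_add_eq Y Δ ((1 + κ) / lammin)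
  rw [Fintype.card_fin] at hevent
  rw [hevent]
  exact (measureReal_mono (Set.ofPred_subset_ofPred.2 fun _ ↦ le_of_lt)).trans hchernoff

/-- Chernoff core of the epoch-waiting-time bound: with
`v = λ_min·κ/(1+κ)`, if `Y_1, …, Y_m` are independent nonnegative random variables whose
moment generating functions at `v` are bounded by `λ_max/(λ_min − v)`, then
`P( ∑_{d=1}^m (Δ + Y_d) > m·(Δ + (1+κ)/λ_min) )
  ≤ exp( m·(−κ + log((λ_max/λ_min)·(1+κ))) )`. -/
theorem epoch_waiting_chernoff {Ω : Type*} [MeasurableSpace Ω] (μ : Measure Ω)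
    [IsProbabilityMeasure μ] (m : ℕ) (hm : 1 ≤ m) (Δ : ℝ) (hΔ : 0 ≤ Δ)
    (lammin lammax κ : ℝ) (h0 : 0 < lammin) (h1 : lammin ≤ lammax) (hκ : 0 < κ)
    (v : ℝ) (hv : v = lammin * κ / (1 + κ))
    (Y : Fin m → Ω → ℝ) (hmeas : ∀ d, Measurable (Y d))
    (hnonneg : ∀ d ω, 0 ≤ Y d ω)
    (hindep : iIndepFun Y μ)
    (hint : ∀ d, Integrable (fun ω => Real.exp (v * Y d ω)) μ)
    (hmgf : ∀ d, ∫ ω, Real.exp (v * Y d ω) ∂μ ≤ lammax / (lammin - v)) :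
    (μ {ω | m * (Δ + (1 + κ) / lammin) < ∑ d, (Δ + Y d ω)}).toReal ≤
      Real.exp (m * (-κ + Real.log ((lammax / lammin) * (1 + κ)))) :=
  epoch_waiting_chernoff_general μ m Δ lammin lammax κ h0 h1 hκ v hv Y hmeas hindep hint hmgf
end

section
/- Let c ≥ 1 and n ≥ 1 be integers and Δ′ ≥ 0, λ_a > 0, λ_h > 0 reals satisfying λ_a·(1 + (c−1)/n) < λ_h/(1 + λ_h·Δ′). Then there exists a real w with 0 < w < λ_h such that n·log( (λ_a+w)/λ_a ) + (n+c−1)·log( (λ_h−w)/λ_h ) − (n+c−1)·w·Δ′ > 0; equivalently, the Chernoff bound ( λ_a/(λ_a+w) )^n · ( e^{wΔ′}·λ_h/(λ_h−w) )^{n+c−1} is strictly less than 1 for some w ∈ (0, λ_h). -/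
open Real Filter Set Topology

/-- Positivity of the Chernoff exponent in Proposition bound-3: if
`λ_a(1 + (c−1)/n) < λ_h/(1 + λ_h Δ′)`, then there is `w ∈ (0, λ_h)` with
`n log((λ_a+w)/λ_a) + (n+c−1) log((λ_h−w)/λ_h) − (n+c−1) w Δ′ > 0`; equivalently the
Chernoff bound `(λ_a/(λ_a+w))^n (e^{wΔ′} λ_h/(λ_h−w))^{n+c−1}` is strictly less
than `1` for some such `w`. -/
theorem chernoff_exponent_positive (c n : ℕ) (hc : 1 ≤ c) (hn : 1 ≤ n)
    (Δ' lama lamh : ℝ) (hΔ : 0 ≤ Δ') (hlama : 0 < lama) (hlamh : 0 < lamh)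
    (hcond : lama * (1 + ((c : ℝ) - 1) / n) < lamh / (1 + lamh * Δ')) :
    ∃ w : ℝ, 0 < w ∧ w < lamh ∧
      0 < (n : ℝ) * Real.log ((lama + w) / lama) +
          ((n : ℝ) + c - 1) * Real.log ((lamh - w) / lamh) -
          ((n : ℝ) + c - 1) * w * Δ' ∧
      (lama / (lama + w)) ^ n *
          (Real.exp (w * Δ') * lamh / (lamh - w)) ^ (n + c - 1) < 1 := by
  set m : ℝ := (n : ℝ) + c - 1 with hm
  have hn0 : (0:ℝ) < n := by exact_mod_cast hn
  have hc1 : (1:ℝ) ≤ c := by exact_mod_cast hc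
  have hm0 : 0 < m := by simp only [hm]; linarith
  have hden : 0 < 1 + lamh * Δ' := by positivity
  set f : ℝ → ℝ := fun w => (n : ℝ) * Real.log ((lama + w) / lama) +
      m * Real.log ((lamh - w) / lamh) - m * w * Δ' with hf
  -- derivative at 0
  set d : ℝ := (n : ℝ) / lama - m / lamh - m * Δ' with hd
  have hderiv : HasDerivAt f d 0 := by
    have h1 : HasDerivAt (fun w : ℝ => (lama + w) / lama) (1 / lama) 0 := by
      simpa using ((hasDerivAt_id (0:ℝ)).const_add lama).div_const lama
    have h1' : HasDerivAt (fun w : ℝ => Real.log ((lama + w) / lama))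
        ((1 / lama) / ((lama + 0) / lama)) 0 :=
      h1.log (by positivity)
    have h2 : HasDerivAt (fun w : ℝ => (lamh - w) / lamh) (-1 / lamh) 0 := by
      simpa using ((hasDerivAt_id (0:ℝ)).const_sub lamh).div_const lamh
    have h2' : HasDerivAt (fun w : ℝ => Real.log ((lamh - w) / lamh))
        ((-1 / lamh) / ((lamh - 0) / lamh)) 0 := by
      refine h2.log ?_
      have : (lamh - 0) / lamh = 1 := by field_simp; ring
      rw [this]; norm_num
    have h3 : HasDerivAt (fun w : ℝ => m * w * Δ') (m * Δ') 0 := by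
      simpa using (((hasDerivAt_id (0:ℝ)).const_mul m).mul_const Δ')
    have := ((h1'.const_mul (n:ℝ)).add (h2'.const_mul m)).sub h3
    refine this.congr_deriv ?_
    rw [hd, sub_zero]
    field_simp
    ring
  have hdpos : 0 < d := by
    have key : lama * (1 + ((c : ℝ) - 1) / n) * (1 + lamh * Δ') < lamh :=
      (lt_div_iff₀ hden).mp hcond
    have key2 : lama * m * (1 + lamh * Δ') < lamh * n := by
      have hnne : (n:ℝ) ≠ 0 := ne_of_gt hn0
      have heq : lama * m * (1 + lamh * Δ') = lama * (1 + ((c : ℝ) - 1) / n) * (1 + lamh * Δ') * n := by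
        rw [hm]; field_simp
        ring
      rw [heq]
      exact mul_lt_mul_of_pos_right key hn0
    have heq2 : d = (lamh * n - lama * m * (1 + lamh * Δ')) / (lama * lamh) := by
      rw [hd]; field_simp; ring
    rw [heq2]
    apply div_pos (by linarith) (by positivity)
  -- slope argument
  have hslope : Tendsto (slope f 0) (𝓝[>] (0:ℝ)) (𝓝 d) :=
    (hasDerivAt_iff_tendsto_slope.mp hderiv).mono_left
      (nhdsWithin_mono 0 (fun x hx => ne_of_gt hx))
  have hev : ∀ᶠ w in 𝓝[>] (0:ℝ), 0 < slope f 0 w := hslope.eventually (lt_mem_nhds hdpos)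
  have hIoo : Ioo (0:ℝ) lamh ∈ 𝓝[>] (0:ℝ) := Ioo_mem_nhdsGT_of_mem ⟨le_refl _, hlamh⟩
  obtain ⟨w, hw1, hw2⟩ := (hev.and (eventually_of_mem hIoo (fun x hx => hx))).exists
  obtain ⟨hwpos, hwlt⟩ := hw2
  have hf0 : f 0 = 0 := by simp [hf, div_self hlama.ne', div_self hlamh.ne']
  have hfw : 0 < f w := by
    have : slope f 0 w = f w / w := by
      simp [slope, hf0, vsub_eq_sub]
      ring
    rw [this] at hw1
    have := mul_pos hw1 hwpos
    rwa [div_mul_cancel₀ _ (ne_of_gt hwpos)] at this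
  refine ⟨w, hwpos, hwlt, hfw, ?_⟩
  -- the product bound
  have hlw : 0 < lamh - w := by linarith
  have haw : 0 < lama + w := by linarith
  set P : ℝ := (lama / (lama + w)) ^ n *
      (Real.exp (w * Δ') * lamh / (lamh - w)) ^ (n + c - 1) with hP
  have hPpos : 0 < P := by positivity
  have hcast : ((n + c - 1 : ℕ) : ℝ) = m := by
    rw [hm]
    have : n + c - 1 = n + (c - 1) := by omega
    rw [this]
    push_cast [Nat.cast_sub hc]
    ring
  have hlogP : Real.log P = -(f w) := by
    rw [hP, Real.log_mul (by positivity) (by positivity), Real.log_pow, Real.log_pow,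
      Real.log_div (by positivity) (ne_of_gt hlw),
      Real.log_mul (by positivity) (ne_of_gt hlamh), Real.log_exp,
      Real.log_div (ne_of_gt hlama) (ne_of_gt haw), hcast, hf]
    simp only
    rw [Real.log_div (by positivity) (ne_of_gt hlama),
      Real.log_div (ne_of_gt hlw) (ne_of_gt hlamh)]
    ring
  have : Real.log P < 0 := by rw [hlogP]; linarith
  exact (Real.log_neg_iff hPpos).mp this
end
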